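/- arXiv:1604.06718 — 16 statements merged into one kernel-verified Lean document; each statement's English description precedes it below -/
import Mathlib

section
/- Let M be a positively ordered semigroup (commutative monoid with a translation-invariant partial order in which 0 is the least element) that is strongly finite, i.e., for every order ideal I the quotient M/I is finite (x+y ≤ y in M/I implies x = 0). If x + z ≤ y + z for x, y, z ∈ M, then the order ideal generated by x is contained in the order ideal generated by y. -/
/-- An order ideal of a positively ordered semigroup: a submonoid that is downward closed. -/
def IsOrderIdeal {M : Type*} [AddCommMonoid M] [PartialOrder M] (I : Set M) : Prop :=
  (0 : M) ∈ I ∧ (∀ a b : M, a ∈ I → b ∈ I → a + b ∈ I) ∧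
    ∀ a b : M, a ≤ b → b ∈ I → a ∈ I

/-- The order ideal generated by `x`: `I(x) = {z | z ≤ n • x for some n}`. -/
def idealGen {M : Type*} [AddCommMonoid M] [PartialOrder M] (x : M) : Set M :=
  {z : M | ∃ n : ℕ, z ≤ n • x}

/-- `M` is strongly finite: for every order ideal `I`, the quotient `M/I` is finite,
i.e. `[x] + [y] ≤ [y]` (that is, `x + y ≤ y + v` for some `v ∈ I`) implies `x ∈ I`. -/
def StronglyFinite (M : Type*) [AddCommMonoid M] [PartialOrder M] : Prop :=
  ∀ I : Set M, IsOrderIdeal I → ∀ x y : M, (∃ v ∈ I, x + y ≤ y + v) → x ∈ I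

/-! Since `I(y)` is an order ideal containing `y`, the inequality `x + z ≤ z + y` says that
`[x] + [z] ≤ [z]` in `M / I(y)`; strong finiteness then puts `x` in `I(y)`, and hence `I(x) ⊆ I(y)`. -/

section idealGen

variable {M : Type*} [AddCommMonoid M] [PartialOrder M]

theorem mem_idealGen_self (y : M) : y ∈ idealGen y :=
  ⟨1, (one_nsmul y).ge⟩

variable [AddLeftMono M]

theorem isOrderIdeal_idealGen (y : M) : IsOrderIdeal (idealGen y) := by
  refine ⟨⟨0, (zero_nsmul y).ge⟩, ?_, fun a b hab ⟨n, hb⟩ => ⟨n, hab.trans hb⟩⟩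
  rintro a b ⟨n, ha⟩ ⟨m, hb⟩
  exact ⟨n + m, (add_le_add ha hb).trans_eq (add_nsmul y n m).symm⟩

theorem idealGen_subset_idealGen_of_mem {x y : M} (hx : x ∈ idealGen y) :
    idealGen x ⊆ idealGen y := by
  obtain ⟨n, hxn⟩ := hx
  rintro w ⟨m, hw⟩
  exact ⟨m * n, hw.trans <| (nsmul_le_nsmul_right hxn m).trans_eq (mul_nsmul' y m n).symm⟩

theorem StronglyFinite.mem_idealGen_of_add_le_add (hsf : StronglyFinite M) {x y z : M}
    (h : x + z ≤ y + z) : x ∈ idealGen y :=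
  hsf (idealGen y) (isOrderIdeal_idealGen y) x z
    ⟨y, mem_idealGen_self y, h.trans_eq (add_comm y z)⟩

end idealGen

theorem stmt_0_general {M : Type*} [AddCommMonoid M] [PartialOrder M]
    [CovariantClass M M (· + ·) (· ≤ ·)]
    (hsf : StronglyFinite M)
    (x y z : M) (h : x + z ≤ y + z) :
    idealGen x ⊆ idealGen y :=
  idealGen_subset_idealGen_of_mem (hsf.mem_idealGen_of_add_le_add h)

theorem stmt_0 {M : Type*} [AddCommMonoid M] [PartialOrder M]
    [CovariantClass M M (· + ·) (· ≤ ·)]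
    (hpos : ∀ x : M, 0 ≤ x) (hsf : StronglyFinite M)
    (x y z : M) (h : x + z ≤ y + z) :
    idealGen x ⊆ idealGen y :=
  stmt_0_general hsf x y z h
end

section
/- Let M be a positively ordered semigroup. If M is nearly separative (i.e., M is preminimal and 2x ≤ x + y ≤ 2y implies x ≤ y), then whenever x + z ≤ y + z with z in both the order ideal generated by x and the order ideal generated by y, it follows that x ≤ y. -/
/-- `M` is preminimal: `x + v ≤ y + v` and `v ≤ w` imply `x + w ≤ y + w`. -/
def Preminimal (M : Type*) [AddCommMonoid M] [PartialOrder M] : Prop :=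
  ∀ x y v w : M, x + v ≤ y + v → v ≤ w → x + w ≤ y + w

/-- `M` is nearly separative: preminimal and `2x ≤ x + y ≤ 2y` implies `x ≤ y`. -/
def NearlySeparative (M : Type*) [AddCommMonoid M] [PartialOrder M] : Prop :=
  Preminimal M ∧ ∀ x y : M, 2 • x ≤ x + y → x + y ≤ 2 • y → x ≤ y

/-!
Preminimality lets an inequality `a + z ≤ b + z` be enlarged to `a + 2ⁿ • v ≤ b + 2ⁿ • v` as soon
as `z ≤ n • v`. Near separativity halves the added term: with `X = a + v` and `Y = b + v`, the
inequality `a + 2 • v ≤ b + 2 • v`, enlarged by `a` resp. `b`, reads `2X ≤ X + Y ≤ 2Y`, so `X ≤ Y`.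
Halving `n` times gives `a + v ≤ b + v`; with `v = x` and `v = y` this is `2x ≤ x + y ≤ 2y`.
-/

section NearlySeparative

variable {M : Type*} [AddCommMonoid M] [PartialOrder M] [CovariantClass M M (· + ·) (· ≤ ·)]

theorem NearlySeparative.add_le_add_of_add_two_nsmul_le (hpos : ∀ x : M, 0 ≤ x)
    (hns : NearlySeparative M) {a b v : M} (h : a + 2 • v ≤ b + 2 • v) : a + v ≤ b + v := by
  obtain ⟨hpre, hsep⟩ := hns
  have hX : 2 • (a + v) ≤ (a + v) + (b + v) := by
    have := hpre a b _ (a + 2 • v) h (le_add_of_nonneg_left (hpos a))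
    calc 2 • (a + v) = a + (a + 2 • v) := by abel
      _ ≤ b + (a + 2 • v) := this
      _ = (a + v) + (b + v) := by abel
  have hY : (a + v) + (b + v) ≤ 2 • (b + v) := by
    have := hpre a b _ (b + 2 • v) h (le_add_of_nonneg_left (hpos b))
    calc (a + v) + (b + v) = a + (b + 2 • v) := by abel
      _ ≤ b + (b + 2 • v) := this
      _ = 2 • (b + v) := by abel
  exact hsep _ _ hX hY

theorem NearlySeparative.add_le_add_of_add_two_pow_nsmul_le (hpos : ∀ x : M, 0 ≤ x)
    (hns : NearlySeparative M) {a b v : M} (k : ℕ) (h : a + 2 ^ k • v ≤ b + 2 ^ k • v) :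
    a + v ≤ b + v := by
  induction k with
  | zero => simpa using h
  | succ k ih =>
    rw [pow_succ, mul_nsmul] at h
    exact ih (hns.add_le_add_of_add_two_nsmul_le hpos h)

theorem NearlySeparative.add_le_add_of_mem_idealGen (hpos : ∀ x : M, 0 ≤ x)
    (hns : NearlySeparative M) {a b z v : M} (h : a + z ≤ b + z) (hz : z ∈ idealGen v) :
    a + v ≤ b + v := by
  obtain ⟨n, hn⟩ := hz
  have hzle : z ≤ 2 ^ n • v :=
    hn.trans (nsmul_le_nsmul_left (hpos v) (Nat.lt_two_pow_self).le)
  exact hns.add_le_add_of_add_two_pow_nsmul_le hpos n (hns.1 a b z _ h hzle)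

end NearlySeparative

theorem stmt_1 {M : Type*} [AddCommMonoid M] [PartialOrder M]
    [CovariantClass M M (· + ·) (· ≤ ·)]
    (hpos : ∀ x : M, 0 ≤ x) (hns : NearlySeparative M)
    (x y z : M) (h : x + z ≤ y + z)
    (hzx : z ∈ idealGen x) (hzy : z ∈ idealGen y) :
    x ≤ y := by
  have hxx : x + x ≤ y + x := hns.add_le_add_of_mem_idealGen hpos h hzx
  have hxy : x + y ≤ y + y := hns.add_le_add_of_mem_idealGen hpos h hzy
  refine hns.2 x y ?_ ?_
  · rw [two_nsmul, add_comm x y]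
    exact hxx
  · rwa [two_nsmul]
end

section
/- Let M be a positively ordered semigroup. If M is nearly separative, then x + 2z ≤ y + 2z implies x + z ≤ y + z for all x, y, z ∈ M. -/
theorem stmt_2_general {M : Type*} [AddCommMonoid M] [PartialOrder M]
    [CovariantClass M M (· + ·) (· ≤ ·)]
    (hns : NearlySeparative M)
    (x y z : M) (h : x + 2 • z ≤ y + 2 • z) :
    x + z ≤ y + z := by
  refine hns.2 (x + z) (y + z) ?_ ?_
  · calc 2 • (x + z) = x + (x + 2 • z) := by abel
      _ ≤ x + (y + 2 • z) := by gcongr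
      _ = (x + z) + (y + z) := by abel
  · calc (x + z) + (y + z) = y + (x + 2 • z) := by abel
      _ ≤ y + (y + 2 • z) := by gcongr
      _ = 2 • (y + z) := by abel

theorem stmt_2 {M : Type*} [AddCommMonoid M] [PartialOrder M]
    [CovariantClass M M (· + ·) (· ≤ ·)]
    (hpos : ∀ x : M, 0 ≤ x) (hns : NearlySeparative M)
    (x y z : M) (h : x + 2 • z ≤ y + 2 • z) :
    x + z ≤ y + z :=
  stmt_2_general hns x y z h
end

section
/- Let M be a positively ordered semigroup in which, whenever x + z ≤ y + z with z ∈ I(x) and z ∈ I(y), one has x ≤ y. Then M is nearly separative: 2x ≤ x + y ≤ 2y implies x ≤ y. -/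
def IdealCancellative (M : Type*) [AddCommMonoid M] [PartialOrder M] : Prop :=
  ∀ x y z : M, x + z ≤ y + z → z ∈ idealGen x → z ∈ idealGen y → x ≤ y

section

variable {M : Type*} [AddCommMonoid M] [PartialOrder M]

theorem mem_idealGen_of_le {x z : M} (hzx : z ≤ x) : z ∈ idealGen x :=
  ⟨1, by simpa using hzx⟩

variable [AddLeftMono M]

-- Cancel `v`, which lies in `I(x + w)` and `I(y + w)` since `v ≤ w`.
theorem preminimal_of_idealCancellative (hpos : ∀ x : M, 0 ≤ x)
    (h : IdealCancellative M) : Preminimal M := by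
  intro x y v w hxy hvw
  have hxw : x + w + v ≤ y + w + v := by
    calc x + w + v = x + v + w := add_right_comm x w v
      _ ≤ y + v + w := add_le_add_left hxy w
      _ = y + w + v := add_right_comm y v w
  exact h _ _ v hxw (mem_idealGen_of_le (hvw.trans (le_add_of_nonneg_left (hpos x))))
    (mem_idealGen_of_le (hvw.trans (le_add_of_nonneg_left (hpos y))))

-- Cancel `z = x`, which lies in `I(y)` since `x ≤ x + y ≤ 2y`.
theorem le_of_two_nsmul_le_add_of_add_le_two_nsmul (hpos : ∀ x : M, 0 ≤ x)
    (h : IdealCancellative M) {x y : M} (h₁ : 2 • x ≤ x + y) (h₂ : x + y ≤ 2 • y) :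
    x ≤ y := by
  refine h x y x ?_ (mem_idealGen_of_le le_rfl) ⟨2, ?_⟩
  · rwa [two_nsmul, add_comm x y] at h₁
  · exact (le_add_of_nonneg_right (hpos y)).trans h₂

end

theorem stmt_3 {M : Type*} [AddCommMonoid M] [PartialOrder M]
    [CovariantClass M M (· + ·) (· ≤ ·)]
    (hpos : ∀ x : M, 0 ≤ x)
    (h : ∀ x y z : M, x + z ≤ y + z → z ∈ idealGen x → z ∈ idealGen y → x ≤ y) :
    NearlySeparative M :=
  ⟨preminimal_of_idealCancellative hpos h, fun _ _ ↦
    le_of_two_nsmul_le_add_of_add_le_two_nsmul hpos h⟩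
end

section
/- Let M be a strongly finite, algebraically ordered commutative monoid (the order is the algebraic order: x ≤ y iff x + z = y for some z). If M is almost unperforated and cancellative, then M is nearly unperforated: whenever there exists n with n·x ≤ n·y and (n+1)·x ≤ (n+1)·y, one has x ≤ y. -/
theorem stmt_5 {M : Type*} [AddCommMonoid M] [PartialOrder M]
    (horder : ∀ x y : M, x ≤ y ↔ ∃ z : M, x + z = y)
    (hsf : StronglyFinite M)
    (hAU : ∀ x y : M, (∃ n : ℕ, (n + 1) • x ≤ n • y) → x ≤ y)
    (hcanc : ∀ x y z : M, x + z = y + z → x = y) :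
    ∀ x y : M, (∃ n : ℕ, n • x ≤ n • y ∧ (n + 1) • x ≤ (n + 1) • y) → x ≤ y := by
  rintro x y ⟨n, hn, hn1⟩
  obtain ⟨c, hc⟩ := (horder _ _).1 hn
  obtain ⟨d, hd⟩ := (horder _ _).1 hn1
  have hxd : x + d = c + y := by
    apply hcanc _ _ (n • x)
    have h1 : (n + 1) • x = n • x + x := succ_nsmul x n
    have h2 : (n + 1) • y = n • y + y := succ_nsmul y n
    calc x + d + n • x = (n + 1) • x + d := by rw [h1]; abel
      _ = n • y + y := by rw [hd, h2]
      _ = (n • x + c) + y := by rw [hc]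
      _ = c + y + n • x := by abel
  have hnd : (n + 1) • c = n • d := by
    apply hcanc _ _ (n • x)
    have : n • (x + d) = n • (c + y) := by rw [hxd]
    rw [smul_add, smul_add] at this
    calc (n + 1) • c + n • x = n • c + c + n • x := by rw [succ_nsmul]
      _ = n • c + n • y := by rw [← hc]; abel
      _ = n • x + n • d := by rw [← this]
      _ = n • d + n • x := by abel
  have hcd : c ≤ d := hAU c d ⟨n, hnd.le⟩
  obtain ⟨e, he⟩ := (horder _ _).1 hcd
  rw [horder]
  refine ⟨e, hcanc _ _ c ?_⟩
  calc x + e + c = x + (c + e) := by abel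
    _ = x + d := by rw [he]
    _ = c + y := hxd
    _ = y + c := by abel
end

section
/- Let M be a strongly finite, algebraically ordered commutative monoid. If M is nearly unperforated and has cancellation into ideals, then M is almost unperforated and cancellative. -/
section Aux

variable {M : Type*} [AddCommMonoid M] [PartialOrder M]

lemma aux_add_le (horder : ∀ x y : M, x ≤ y ↔ ∃ z : M, x + z = y)
    {a b : M} (c : M) (h : a ≤ b) : a + c ≤ b + c := by
  obtain ⟨z, hz⟩ := (horder a b).mp h
  exact (horder _ _).mpr ⟨z, by rw [add_right_comm, hz]⟩

lemma aux_smul_le (horder : ∀ x y : M, x ≤ y ↔ ∃ z : M, x + z = y)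
    {a b : M} (h : a ≤ b) (n : ℕ) : n • a ≤ n • b := by
  induction n with
  | zero => simp
  | succ n ih =>
      rw [succ_nsmul, succ_nsmul]
      calc n • a + a ≤ n • b + a := aux_add_le horder a ih
        _ = a + n • b := add_comm _ _
        _ ≤ b + n • b := aux_add_le horder _ h
        _ = n • b + b := add_comm _ _

lemma aux_ideal (horder : ∀ x y : M, x ≤ y ↔ ∃ z : M, x + z = y)
    (y : M) : IsOrderIdeal (idealGen y) := by
  refine ⟨⟨0, by simp⟩, ?_, ?_⟩
  · rintro a b ⟨n, hn⟩ ⟨m, hm⟩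
    refine ⟨n + m, ?_⟩
    obtain ⟨z, hz⟩ := (horder a _).mp hn
    obtain ⟨w, hw⟩ := (horder b _).mp hm
    exact (horder _ _).mpr ⟨z + w, by rw [add_nsmul, ← hz, ← hw]; abel⟩
  · rintro a b hab ⟨n, hn⟩
    exact ⟨n, le_trans hab hn⟩

/-- Key arithmetic lemma: if `x + m₀•y = (m₀+1)•y` and `y + m₁•x = (m₁+1)•x`
then `x ≤ y`, using near unperforation. -/
lemma aux_key2 (hnu : ∀ x y : M, (∃ n : ℕ, n • x ≤ n • y ∧ (n + 1) • x ≤ (n + 1) • y) → x ≤ y)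
    {x y : M} {m0 m1 : ℕ}
    (h0 : x + m0 • y = (m0 + 1) • y) (h1 : y + m1 • x = (m1 + 1) • x) : x ≤ y := by
  have sc : ∀ (a b : ℕ) (z : M), a = b → a • z = b • z := fun a b z h => by rw [h]
  have gen0 : ∀ i : ℕ, x + (m0 + i) • y = (m0 + i + 1) • y := by
    intro i
    induction i with
    | zero => simpa using h0
    | succ i ih =>
        have e1 : (m0 + (i + 1)) • y = (m0 + i) • y + y := by
          rw [← succ_nsmul]
          exact sc _ _ _ (by omega)
        rw [e1, ← add_assoc, ih, ← succ_nsmul]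
        exact sc _ _ _ (by omega)
  have gen1 : ∀ i : ℕ, y + (m1 + i) • x = (m1 + i + 1) • x := by
    intro i
    induction i with
    | zero => simpa using h1
    | succ i ih =>
        have e1 : (m1 + (i + 1)) • x = (m1 + i) • x + x := by
          rw [← succ_nsmul]
          exact sc _ _ _ (by omega)
        rw [e1, ← add_assoc, ih, ← succ_nsmul]
        exact sc _ _ _ (by omega)
  have hx_gen : ∀ m : ℕ, m0 ≤ m → x + m • y = (m + 1) • y := by
    intro m hm
    obtain ⟨i, rfl⟩ : ∃ i, m = m0 + i := ⟨m - m0, by omega⟩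
    exact gen0 i
  have hy_gen : ∀ m : ℕ, m1 ≤ m → y + m • x = (m + 1) • x := by
    intro m hm
    obtain ⟨i, rfl⟩ : ∃ i, m = m1 + i := ⟨m - m1, by omega⟩
    exact gen1 i
  have iter0 : ∀ j : ℕ, j • x + m0 • y = (m0 + j) • y := by
    intro j
    induction j with
    | zero => simp
    | succ j ih =>
        have e1 : (j + 1) • x + m0 • y = x + (j • x + m0 • y) := by
          rw [succ_nsmul]; abel
        rw [e1, ih, hx_gen (m0 + j) (by omega)]
        exact sc _ _ _ (by omega)
  have iter1 : ∀ j : ℕ, j • y + m1 • x = (m1 + j) • x := by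
    intro j
    induction j with
    | zero => simp
    | succ j ih =>
        have e1 : (j + 1) • y + m1 • x = y + (j • y + m1 • x) := by
          rw [succ_nsmul]; abel
        rw [e1, ih, hy_gen (m1 + j) (by omega)]
        exact sc _ _ _ (by omega)
  rcases Nat.eq_zero_or_pos m0 with hm0 | hm0
  · subst hm0
    simp only [zero_smul, add_zero, zero_add, one_smul] at h0
    exact le_of_eq h0
  · -- k := m0 + m1, k • x = k • y
    set k := m0 + m1 with hk_def
    have hk : k • x = k • y := by
      calc k • x = (m1 + m0) • x := sc _ _ _ (by omega)
        _ = m0 • y + m1 • x := (iter1 m0).symm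
        _ = m1 • x + m0 • y := add_comm _ _
        _ = (m0 + m1) • y := iter0 m1
        _ = k • y := rfl
    set n := (m0 + 1) * k with hn_def
    have hkpos : 1 ≤ k := by omega
    have hnge : m0 ≤ n := by
      have : m0 + 1 ≤ (m0 + 1) * k := Nat.le_mul_of_pos_right _ hkpos
      omega
    have hnx : n • x = n • y := by
      rw [hn_def, mul_smul, mul_smul, hk]
    have hn1 : (n + 1) • x = (n + 1) • y := by
      rw [succ_nsmul, add_comm (n • x) x, hnx, hx_gen n hnge]
    exact hnu x y ⟨n, le_of_eq hnx, le_of_eq hn1⟩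

lemma aux_keymain (horder : ∀ x y : M, x ≤ y ↔ ∃ z : M, x + z = y)
    (hsf : StronglyFinite M)
    (hnu : ∀ x y : M, (∃ n : ℕ, n • x ≤ n • y ∧ (n + 1) • x ≤ (n + 1) • y) → x ≤ y)
    {x y v : M} (hv : v ∈ idealGen (x + y)) (h : x + v = y + v) : x = y := by
  obtain ⟨N, hN⟩ := hv
  -- x ∈ idealGen y
  obtain ⟨a, ha⟩ : x ∈ idealGen y := by
    refine hsf (idealGen y) (aux_ideal horder y) x v ⟨y, ⟨1, by simp⟩, ?_⟩
    rw [h, add_comm]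
  -- y ∈ idealGen x
  obtain ⟨b, hb⟩ : y ∈ idealGen x := by
    refine hsf (idealGen x) (aux_ideal horder x) y v ⟨x, ⟨1, by simp⟩, ?_⟩
    rw [← h, add_comm]
  -- v ≤ (N * (a+1)) • y
  have hxy_y : x + y ≤ (a + 1) • y := by
    calc x + y ≤ a • y + y := aux_add_le horder y ha
      _ = (a + 1) • y := (succ_nsmul y a).symm
  have hv_y : v ≤ (N * (a + 1)) • y := by
    calc v ≤ N • (x + y) := hN
      _ ≤ N • ((a + 1) • y) := aux_smul_le horder hxy_y N
      _ = (N * (a + 1)) • y := (mul_smul N (a + 1) y).symm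
  have hxy_x : x + y ≤ (b + 1) • x := by
    calc x + y = y + x := add_comm _ _
      _ ≤ b • x + x := aux_add_le horder x hb
      _ = (b + 1) • x := (succ_nsmul x b).symm
  have hv_x : v ≤ (N * (b + 1)) • x := by
    calc v ≤ N • (x + y) := hN
      _ ≤ N • ((b + 1) • x) := aux_smul_le horder hxy_x N
      _ = (N * (b + 1)) • x := (mul_smul N (b + 1) x).symm
  set m0 := N * (a + 1)
  set m1 := N * (b + 1)
  obtain ⟨w0, hw0⟩ := (horder v _).mp hv_y
  obtain ⟨w1, hw1⟩ := (horder v _).mp hv_x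
  have h0 : x + m0 • y = (m0 + 1) • y := by
    calc x + m0 • y = x + (v + w0) := by rw [hw0]
      _ = (x + v) + w0 := (add_assoc _ _ _).symm
      _ = (y + v) + w0 := by rw [h]
      _ = y + (v + w0) := add_assoc _ _ _
      _ = y + m0 • y := by rw [hw0]
      _ = m0 • y + y := add_comm _ _
      _ = (m0 + 1) • y := (succ_nsmul y m0).symm
  have h1 : y + m1 • x = (m1 + 1) • x := by
    calc y + m1 • x = y + (v + w1) := by rw [hw1]
      _ = (y + v) + w1 := (add_assoc _ _ _).symm
      _ = (x + v) + w1 := by rw [h]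
      _ = x + (v + w1) := add_assoc _ _ _
      _ = x + m1 • x := by rw [hw1]
      _ = m1 • x + x := add_comm _ _
      _ = (m1 + 1) • x := (succ_nsmul x m1).symm
  exact le_antisymm (aux_key2 hnu h0 h1) (aux_key2 hnu h1 h0)

end Aux

theorem stmt_6 {M : Type*} [AddCommMonoid M] [PartialOrder M]
    (horder : ∀ x y : M, x ≤ y ↔ ∃ z : M, x + z = y)
    (hsf : StronglyFinite M)
    (hnu : ∀ x y : M, (∃ n : ℕ, n • x ≤ n • y ∧ (n + 1) • x ≤ (n + 1) • y) → x ≤ y)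
    (hci : ∀ x y z : M, x + z = y + z → ∃ v ∈ idealGen (x + y), x + v = y + v) :
    (∀ x y : M, (∃ n : ℕ, (n + 1) • x ≤ n • y) → x ≤ y) ∧
      (∀ x y z : M, x + z = y + z → x = y) := by
  constructor
  · rintro x y ⟨n, hn⟩
    have hxx : n • x ≤ (n + 1) • x := (horder _ _).mpr ⟨x, (succ_nsmul x n).symm⟩
    have hyy : n • y ≤ (n + 1) • y := (horder _ _).mpr ⟨y, (succ_nsmul y n).symm⟩
    exact hnu x y ⟨n, le_trans hxx hn, le_trans hn hyy⟩
  · intro x y z hxyz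
    obtain ⟨v, hv, h⟩ := hci x y z hxyz
    exact aux_keymain horder hsf hnu hv h
end

section
/- Let G be a simple partially ordered abelian group (every nonzero positive element is an order-unit). Then G⁺_au = {x ∈ G : n·x ∈ G⁺ \ {0} for some n ∈ ℕ} ∪ {0}, where G⁺_au = {x : ∃ n, n·x ∈ G⁺ ∧ (n+1)·x ∈ G⁺}. -/
theorem stmt_9 {G : Type*} [AddCommGroup G] (P : AddSubmonoid G)
    (hstrict : ∀ x : G, x ∈ P → -x ∈ P → x = 0)
    (hsimple : ∀ u : G, u ∈ P → u ≠ 0 → ∀ x : G, ∃ N : ℕ, N • u - x ∈ P) :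
    {x : G | ∃ n : ℕ, n • x ∈ P ∧ (n + 1) • x ∈ P} =
      {x : G | ∃ n : ℕ, n • x ∈ P ∧ n • x ≠ 0} ∪ {0} := by
  ext x
  simp only [Set.mem_setOf_eq, Set.mem_union, Set.mem_singleton_iff]
  constructor
  · rintro ⟨n, h1, h2⟩
    by_cases hn : n • x = 0
    · by_cases hn1 : (n + 1) • x = 0
      · right
        have := hn1
        rw [succ_nsmul, hn, zero_add] at this
        exact this
      · exact Or.inl ⟨n + 1, h2, hn1⟩
    · exact Or.inl ⟨n, h1, hn⟩
  · rintro (⟨n, h1, h2⟩ | rfl)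
    · have hn : n ≠ 0 := by rintro rfl; simp at h2
      obtain ⟨N, hN⟩ := hsimple (n • x) h1 h2 x
      have hN0 : N ≠ 0 := by
        rintro rfl
        rw [zero_smul, zero_sub] at hN
        have hneg : -(n • x) ∈ P := by
          simpa [smul_neg] using P.nsmul_mem hN n
        exact h2 (hstrict _ h1 hneg)
      set k := N * n with hk
      have hk1 : 1 ≤ k := Nat.one_le_iff_ne_zero.2 (Nat.mul_ne_zero hN0 hn)
      have hkx : k • x = N • (n • x) := mul_smul N n x
      have hkmem : k • x ∈ P := hkx ▸ P.nsmul_mem h1 N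
      have heq : k • x = (k - 1) • x + x := by
        conv_lhs => rw [← Nat.succ_pred_eq_of_pos hk1]
        rw [succ_nsmul, Nat.pred_eq_sub_one]
      refine ⟨k - 1, ?_, ?_⟩
      · have : k • x - x ∈ P := by rw [hkx]; exact hN
        rwa [heq, add_sub_cancel_right] at this
      · rwa [Nat.sub_add_cancel hk1]
    · exact ⟨0, by simpa using P.zero_mem, by simpa using P.zero_mem⟩
end

section
/- Let M be a strongly finite, algebraically ordered commutative monoid with cancellation into ideals. If M is almost unperforated, then the image of M in its Grothendieck group, with the order induced by the cone ι(M), is almost unperforated: (n+1)·ι(x) ≤ n·ι(y) in Gr(M) for some n implies ι(x) ≤ ι(y). -/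
/-- `(G, ι)` is the Grothendieck group of `M`: `ι a = ι b` iff `a + t = b + t` for some `t`,
and every element of `G` is a difference of elements in the image of `ι`. -/
theorem stmt_10 {M G : Type*} [AddCommMonoid M] [PartialOrder M] [AddCommGroup G]
    (horder : ∀ x y : M, x ≤ y ↔ ∃ z : M, x + z = y)
    (hsf : StronglyFinite M)
    (hci : ∀ x y z : M, x + z = y + z → ∃ v ∈ idealGen (x + y), x + v = y + v)
    (hAU : ∀ x y : M, (∃ n : ℕ, (n + 1) • x ≤ n • y) → x ≤ y)
    (ι : M →+ G)
    (hι : ∀ a b : M, ι a = ι b ↔ ∃ t : M, a + t = b + t)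
    (hsur : ∀ g : G, ∃ a b : M, g = ι a - ι b) :
    ∀ x y : M, (∃ n : ℕ, n • ι y - (n + 1) • ι x ∈ Set.range ι) →
      ι y - ι x ∈ Set.range ι := by
  -- basic order facts
  have hle_add : ∀ a c : M, a ≤ a + c := fun a c => (horder a (a + c)).mpr ⟨c, rfl⟩
  have hadd_le_add : ∀ a b c d : M, a ≤ b → c ≤ d → a + c ≤ b + d := by
    intro a b c d hab hcd
    obtain ⟨z1, hz1⟩ := (horder a b).mp hab
    obtain ⟨z2, hz2⟩ := (horder c d).mp hcd
    exact (horder _ _).mpr ⟨z1 + z2, by rw [← hz1, ← hz2]; abel⟩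
  have hsmul_le : ∀ (k : ℕ) (a b : M), a ≤ b → k • a ≤ k • b := by
    intro k a b hab
    obtain ⟨z, hz⟩ := (horder a b).mp hab
    exact (horder _ _).mpr ⟨k • z, by rw [← smul_add, hz]⟩
  intro x y ⟨n, u, hu⟩
  -- the ideal generated by y
  have hideal : IsOrderIdeal (idealGen y) := by
    refine ⟨⟨0, by simp⟩, ?_, ?_⟩
    · rintro a b ⟨na, ha⟩ ⟨nb, hb⟩
      exact ⟨na + nb, by rw [add_nsmul]; exact hadd_le_add _ _ _ _ ha hb⟩
    · rintro a b hab ⟨nb, hb⟩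
      exact ⟨nb, le_trans hab hb⟩
  -- get the relation in M
  have h1 : ι ((n + 1) • x + u) = ι (n • y) := by
    simp only [map_add, map_nsmul, hu]
    abel
  obtain ⟨t, ht⟩ := (hι _ _).mp h1
  obtain ⟨v, hvmem, hveq⟩ := hci ((n + 1) • x + u) (n • y) t ht
  -- hveq : (n+1)•x + u + v = n•y + v
  -- x is in the ideal generated by y
  have hx : x ∈ idealGen y := by
    apply hsf (idealGen y) hideal x (n • x + u + v)
    refine ⟨n • y, ⟨n, le_refl _⟩, ?_⟩
    have e1 : x + (n • x + u + v) = (n + 1) • x + u + v := by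
      rw [succ_nsmul]; abel
    rw [e1, hveq]
    exact (horder _ _).mpr ⟨n • x + u, by abel⟩
  -- u is in the ideal generated by y
  have hu' : u ∈ idealGen y := by
    apply hsf (idealGen y) hideal u ((n + 1) • x + v)
    refine ⟨n • y, ⟨n, le_refl _⟩, ?_⟩
    have e1 : u + ((n + 1) • x + v) = (n + 1) • x + u + v := by abel
    rw [e1, hveq]
    exact (horder _ _).mpr ⟨(n + 1) • x, by abel⟩
  obtain ⟨m₀, hm₀⟩ := hx
  obtain ⟨m₁, hm₁⟩ := hu'
  obtain ⟨k, hk⟩ := hvmem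
  -- bound v by a multiple of y
  set C : ℕ := (n + 1) * m₀ + m₁ + n with hC
  have hsum : (n + 1) • x + u + n • y ≤ C • y := by
    have h2 : (n + 1) • x ≤ ((n + 1) * m₀) • y := by
      rw [← smul_smul]; exact hsmul_le _ _ _ hm₀
    have h3 : (n + 1) • x + u ≤ ((n + 1) * m₀) • y + m₁ • y :=
      hadd_le_add _ _ _ _ h2 hm₁
    have h4 : (n + 1) • x + u + n • y ≤ (((n + 1) * m₀) • y + m₁ • y) + n • y :=
      hadd_le_add _ _ _ _ h3 (le_refl _)
    calc (n + 1) • x + u + n • y ≤ (((n + 1) * m₀) • y + m₁ • y) + n • y := h4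
      _ = C • y := by rw [hC, add_nsmul, add_nsmul]
  set K : ℕ := k * C with hK
  have hvK : v ≤ K • y := by
    calc v ≤ k • ((n + 1) • x + u + n • y) := hk
      _ ≤ k • (C • y) := hsmul_le _ _ _ hsum
      _ = K • y := by rw [hK, ← smul_smul]
  -- iterate the relation
  set A : M := (n + 1) • x + u with hA
  set B : M := n • y with hB
  have hAB : A + v = B + v := hveq
  have key : ∀ m : ℕ, m • A + v = m • B + v := by
    intro m
    induction m with
    | zero => simp
    | succ m ih =>
      calc (m + 1) • A + v = A + (m • A + v) := by rw [succ_nsmul]; abel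
        _ = A + (m • B + v) := by rw [ih]
        _ = m • B + (A + v) := by abel
        _ = m • B + (B + v) := by rw [hAB]
        _ = (m + 1) • B + v := by rw [succ_nsmul]; abel
  -- derive the unperforation hypothesis
  set N : ℕ := (K + 1) * n + K with hN
  have hfinal : (N + 1) • x ≤ N • y := by
    have h5 := key (K + 1)
    have e2 : (K + 1) • A = ((K + 1) * (n + 1)) • x + (K + 1) • u := by
      rw [hA, smul_add, ← smul_smul]
    have e3 : (K + 1) • B = ((K + 1) * n) • y := by rw [hB, ← smul_smul]
    rw [e2, e3] at h5
    have h6 : ((K + 1) * (n + 1)) • x ≤ ((K + 1) * n) • y + v := by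
      refine (horder _ _).mpr ⟨(K + 1) • u + v, ?_⟩
      rw [← h5]; abel
    have h7 : ((K + 1) * n) • y + v ≤ ((K + 1) * n) • y + K • y :=
      hadd_le_add _ _ _ _ (le_refl _) hvK
    have h8 : ((K + 1) * n) • y + K • y = N • y := by rw [hN, add_nsmul]
    have e4 : (K + 1) * (n + 1) = N + 1 := by rw [hN]; ring
    calc (N + 1) • x = ((K + 1) * (n + 1)) • x := by rw [e4]
      _ ≤ ((K + 1) * n) • y + v := h6
      _ ≤ ((K + 1) * n) • y + K • y := h7
      _ = N • y := h8
  have hxy : x ≤ y := hAU x y ⟨N, hfinal⟩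
  obtain ⟨z, hz⟩ := (horder x y).mp hxy
  exact ⟨z, by rw [← hz, map_add]; abel⟩
end

section
/- Let M be a positively ordered semigroup that is nearly unperforated and order-cancellative. Then the cone Gr(M)^{++} = {ι(x) − ι(y) : y ≤ x in M} in the Grothendieck group of M is nearly unperforated: if a, b are elements of Gr(M)^{++} with n·a ≤ n·b and (n+1)·a ≤ (n+1)·b for some n, then a ≤ b in the order given by Gr(M)^{++}. -/
/-- The cone `Gr(M)^{++} = {ι x - ι y | y ≤ x in M}` in the Grothendieck group of `M`. -/
def conePP {M G : Type*} [AddCommMonoid M] [PartialOrder M] [AddCommGroup G]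
    (ι : M →+ G) : Set G :=
  {g : G | ∃ x y : M, y ≤ x ∧ g = ι x - ι y}

private lemma aux_nsmul {M : Type*} [AddCommMonoid M] [PartialOrder M]
    [CovariantClass M M (· + ·) (· ≤ ·)]
    (n : ℕ) (q p t₁ t₂ : M) (h : n • q + t₁ ≤ n • p + t₁) :
    n • (q + (t₁ + t₂)) ≤ n • (p + (t₁ + t₂)) := by
  cases n with
  | zero => simp
  | succ m =>
    have e : ∀ z : M, (m + 1) • (z + (t₁ + t₂)) =
        ((m + 1) • z + t₁) + (m • t₁ + (m + 1) • t₂) := by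
      intro z
      rw [smul_add, smul_add, succ_nsmul t₁]
      abel
    rw [e q, e p]
    exact add_le_add_left h _

theorem stmt_11 {M G : Type*} [AddCommMonoid M] [PartialOrder M]
    [CovariantClass M M (· + ·) (· ≤ ·)] [AddCommGroup G]
    (hpos : ∀ x : M, 0 ≤ x)
    (hoc : ∀ x y z : M, x + z ≤ y + z → x ≤ y)
    (hnu : ∀ x y : M, (∃ n : ℕ, n • x ≤ n • y ∧ (n + 1) • x ≤ (n + 1) • y) → x ≤ y)
    (ι : M →+ G)
    (hι : ∀ a b : M, ι a = ι b ↔ ∃ t : M, a + t = b + t)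
    (hsur : ∀ g : G, ∃ a b : M, g = ι a - ι b) :
    ∀ a b : G, a ∈ conePP ι → b ∈ conePP ι →
      (∃ n : ℕ, n • b - n • a ∈ conePP ι ∧ (n + 1) • b - (n + 1) • a ∈ conePP ι) →
      b - a ∈ conePP ι := by
  rintro a b ⟨x₁, y₁, hy₁, rfl⟩ ⟨x₂, y₂, hy₂, rfl⟩
    ⟨n, ⟨v₁, u₁, huv₁, h1⟩, ⟨v₂, u₂, huv₂, h2⟩⟩
  set p : M := x₂ + y₁ with hp
  set q : M := y₂ + x₁ with hq
  -- turn each cone condition into an inequality in M up to translation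
  have key : ∀ (k : ℕ) (v u : M), u ≤ v →
      k • (ι x₂ - ι y₂) - k • (ι x₁ - ι y₁) = ι v - ι u →
      ∃ t : M, k • q + t ≤ k • p + t := by
    intro k v u huv h
    have e1 : ι (v + k • q) = ι (u + k • p) := by
      apply eq_of_sub_eq_zero
      have : ι (v + k • q) - ι (u + k • p) =
          (ι v - ι u) - (k • (ι x₂ - ι y₂) - k • (ι x₁ - ι y₁)) := by
        rw [hp, hq, map_add, map_add, map_nsmul, map_nsmul, map_add, map_add,
          smul_sub, smul_sub, smul_add, smul_add]
        abel
      rw [this, ← h, sub_self]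
    obtain ⟨t, ht⟩ := (hι _ _).mp e1
    refine ⟨t + u, ?_⟩
    apply hoc _ _ u
    have step1 : u + k • q + t ≤ v + k • q + t :=
      add_le_add_left (add_le_add_left huv _) _
    have step2 : u + k • q + t ≤ u + k • p + t := by
      calc u + k • q + t ≤ v + k • q + t := step1
        _ = u + k • p + t := ht
    calc k • q + (t + u) + u = (u + k • q + t) + u := by abel
      _ ≤ (u + k • p + t) + u := add_le_add_left step2 u
      _ = k • p + (t + u) + u := by abel
  obtain ⟨t₁, k1⟩ := key n v₁ u₁ huv₁ h1
  obtain ⟨t₂, k2⟩ := key (n + 1) v₂ u₂ huv₂ h2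
  have main : q + (t₁ + t₂) ≤ p + (t₁ + t₂) := by
    apply hnu
    refine ⟨n, aux_nsmul n q p t₁ t₂ k1, ?_⟩
    have := aux_nsmul (n + 1) q p t₂ t₁ k2
    rwa [add_comm t₂ t₁] at this
  refine ⟨p + (t₁ + t₂), q + (t₁ + t₂), main, ?_⟩
  simp only [hp, hq, map_add]
  abel
end

section
/- Let M and N be commutative monoids equipped with the algebraic order, with N cancellative and almost unperforated. Then every monoid homomorphism f : M → N extends uniquely through the map ῑ : M → Gr(M)⁺_au: there is a unique monoid homomorphism f̄ : Gr(M)⁺_au → N with f̄ ∘ ῑ = f. -/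
theorem stmt_12 {M G N : Type*} [AddCommMonoid M] [AddCommGroup G] [AddCommMonoid N]
    (hNcanc : ∀ a b c : N, a + c = b + c → a = b)
    (hNAU : ∀ x y : N, (∃ n : ℕ, ∃ z : N, (n + 1) • x + z = n • y) → ∃ z : N, x + z = y)
    (ι : M →+ G)
    (hι : ∀ a b : M, ι a = ι b ↔ ∃ t : M, a + t = b + t)
    (hsur : ∀ g : G, ∃ a b : M, g = ι a - ι b)
    (Gau : AddSubmonoid G)
    (hGau : ∀ g : G, g ∈ Gau ↔
      ∃ n : ℕ, n • g ∈ Set.range ι ∧ (n + 1) • g ∈ Set.range ι)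
    (f : M →+ N) :
    ∃! F : Gau →+ N, ∀ (a : M) (h : ι a ∈ Gau), F ⟨ι a, h⟩ = f a := by
  -- well-definedness of the value attached to a representation g = ι b - ι a
  have wd : ∀ (g : G) (a b a' b' : M) (z z' : N),
      g = ι b - ι a → g = ι b' - ι a' → f a + z = f b → f a' + z' = f b' → z = z' := by
    intro g a b a' b' z z' h1 h2 h3 h4
    have hsub : ι b - ι a = ι b' - ι a' := h1 ▸ h2
    have hadd : ι (b + a') = ι (b' + a) := by
      rw [map_add, map_add]
      exact sub_eq_sub_iff_add_eq_add.mp hsub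
    obtain ⟨t, ht⟩ := (hι _ _).1 hadd
    have hft : f b + f a' + f t = f b' + f a + f t := by
      have := congrArg f ht
      simpa [map_add] using this
    have hba : f b + f a' = f b' + f a := hNcanc _ _ _ hft
    have : z + (f a + f a') = z' + (f a + f a') := by
      calc z + (f a + f a') = (f a + z) + f a' := by abel
        _ = f b + f a' := by rw [h3]
        _ = f b' + f a := hba
        _ = (f a' + z') + f a := by rw [h4]
        _ = z' + (f a + f a') := by abel
    exact hNcanc _ _ _ this
  -- existence of a representation with a value
  have key : ∀ g : Gau, ∃ z : N, ∃ a b : M, (g : G) = ι b - ι a ∧ f a + z = f b := by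
    intro g
    obtain ⟨n, ⟨a, ha⟩, ⟨b, hb⟩⟩ := (hGau g).1 g.2
    have h1 : ι ((n + 1) • a) = ι (n • b) := by
      rw [map_nsmul, map_nsmul, ha, hb]
      exact smul_comm _ _ _
    obtain ⟨t, ht⟩ := (hι _ _).1 h1
    have h2 : (n + 1) • f a + f t = n • f b + f t := by
      have := congrArg f ht
      simpa [map_add, map_nsmul] using this
    have h3 : (n + 1) • f a = n • f b := hNcanc _ _ _ h2
    obtain ⟨z, hz⟩ := hNAU (f a) (f b) ⟨n, 0, by rw [add_zero, h3]⟩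
    refine ⟨z, a, b, ?_, hz⟩
    rw [ha, hb, succ_nsmul]
    abel
  set Fraw : Gau → N := fun g => (key g).choose with hFraw
  have Fspec : ∀ g : Gau, ∃ a b : M, (g : G) = ι b - ι a ∧ f a + Fraw g = f b :=
    fun g => (key g).choose_spec
  have Fadd : ∀ g h : Gau, Fraw (g + h) = Fraw g + Fraw h := by
    intro g h
    obtain ⟨a, b, hab, hz⟩ := Fspec g
    obtain ⟨c, d, hcd, hw⟩ := Fspec h
    obtain ⟨p, q, hpq, hu⟩ := Fspec (g + h)
    refine wd ((g : G) + (h : G)) p q (a + c) (b + d) _ _ ?_ ?_ hu ?_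
    · simpa using hpq
    · rw [map_add, map_add, hab, hcd]; abel
    · rw [map_add, map_add, ← hz, ← hw]; abel
  have Fι : ∀ (a : M) (h : ι a ∈ Gau), Fraw ⟨ι a, h⟩ = f a := by
    intro a h
    obtain ⟨p, q, hpq, hu⟩ := Fspec ⟨ι a, h⟩
    exact wd (ι a) p q 0 a _ (f a) hpq (by simp) hu (by simp)
  have Fzero : Fraw 0 = 0 := by
    obtain ⟨p, q, hpq, hu⟩ := Fspec 0
    exact wd (0 : G) p q 0 0 _ (0 : N) hpq (by simp) hu (by simp)
  refine ⟨⟨⟨Fraw, Fzero⟩, fun x y => Fadd x y⟩, Fι, ?_⟩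
  intro F' hF'
  ext g
  obtain ⟨n, ⟨a, ha⟩, ⟨b, hb⟩⟩ := (hGau g).1 g.2
  have hmem : ∀ c : M, ι c ∈ Gau := by
    intro c
    refine (hGau _).2 ⟨1, ⟨c, by simp⟩, ⟨c + c, by simp [map_add, two_nsmul]⟩⟩
  have hgb : g + (⟨ι a, hmem a⟩ : Gau) = ⟨ι b, hmem b⟩ := by
    apply Subtype.ext
    show (g : G) + ι a = ι b
    rw [ha, hb, succ_nsmul]
    abel
  have e1 : F' g + f a = f b := by
    rw [← hF' a (hmem a), ← hF' b (hmem b), ← map_add, hgb]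
  have e2 : Fraw g + f a = f b := by
    rw [← Fι a (hmem a), ← Fι b (hmem b), ← Fadd, hgb]
  exact hNcanc _ _ _ (e1.trans e2.symm)
end

section
/- Let M be a finite, algebraically ordered commutative monoid. If M is weakly divisible (for every x and n there exist y, z with x = n·y + (n+1)·z), then the cone Gr(M)⁺_au in the Grothendieck group is weakly divisible. -/
/-- The almost-unperforation cone `Gr(M)⁺_au` in the Grothendieck group of `M`. -/
def grAu {M G : Type*} [AddCommMonoid M] [AddCommGroup G] (ι : M →+ G) : Set G :=
  {g : G | ∃ n : ℕ, n • g ∈ Set.range ι ∧ (n + 1) • g ∈ Set.range ι}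

theorem range_subset_grAu {M G : Type*} [AddCommMonoid M] [AddCommGroup G] (ι : M →+ G)
    (c : M) : ι c ∈ grAu ι := by
  refine ⟨1, ⟨c, by simp⟩, ⟨c + c, ?_⟩⟩
  rw [map_add]
  norm_num [two_nsmul]

set_option maxHeartbeats 4000000 in
theorem stmt_13 {M G : Type*} [AddCommMonoid M] [AddCommGroup G]
    (hfin : ∀ x y : M, x + y = x → y = 0)
    (hwd : ∀ (x : M) (n : ℕ), ∃ y z : M, x = n • y + (n + 1) • z)
    (ι : M →+ G)
    (hι : ∀ a b : M, ι a = ι b ↔ ∃ t : M, a + t = b + t)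
    (hsur : ∀ g : G, ∃ a b : M, g = ι a - ι b) :
    ∀ g ∈ grAu ι, ∀ n : ℕ, ∃ y ∈ grAu ι, ∃ z ∈ grAu ι, g = n • y + (n + 1) • z := by
  intro g hg n
  rcases n with _ | np
  · -- n = 0 : take y = 0, z = g
    exact ⟨0, ⟨0, ⟨0, by simp⟩, ⟨0, by simp⟩⟩, g, hg, by simp⟩
  obtain ⟨m, ⟨a, ha⟩, ⟨b, hb⟩⟩ := hg
  rcases m with _ | mp
  · -- m = 0 : then g = ι b is in the image; decompose b directly
    have hgb : g = ι b := by rw [hb, one_nsmul]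
    obtain ⟨y0, z0, hy0⟩ := hwd b (np+1)
    refine ⟨ι y0, range_subset_grAu ι y0, ι z0, range_subset_grAu ι z0, ?_⟩
    rw [hgb, hy0, map_add, map_nsmul, map_nsmul]
  · -- main case : m = mp+1 ≥ 1, n = np+1 ≥ 1
    obtain ⟨u, v, hu⟩ := hwd a (2*(np+1)*(np+2)*(2*mp+3))
    obtain ⟨p, q, hp⟩ := hwd b (2*(np+1)*(np+2)*(2*mp+3))
    have hg1 : ((mp+1) : ℕ) • g = (2*(np+1)*(np+2)*(2*mp+3)) • ι u + ((2*(np+1)*(np+2)*(2*mp+3))+1) • ι v := by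
      rw [← ha, hu, map_add, map_nsmul, map_nsmul]
    have hg2 : ((mp+2) : ℕ) • g = (2*(np+1)*(np+2)*(2*mp+3)) • ι p + ((2*(np+1)*(np+2)*(2*mp+3))+1) • ι q := by
      rw [← hb, hp, map_add, map_nsmul, map_nsmul]
    have hLg : ((2*(np+1)*(np+2)*(2*mp+3)*(2*mp+3)) : ℕ) • g
        = (2*(np+1)*(np+2)*(2*mp+3)) • ((2*(np+1)*(np+2)*(2*mp+3)) • ι u + ((2*(np+1)*(np+2)*(2*mp+3))+1) • ι v) + (2*(np+1)*(np+2)*(2*mp+3)) • ((2*(np+1)*(np+2)*(2*mp+3)) • ι p + ((2*(np+1)*(np+2)*(2*mp+3))+1) • ι q) := by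
      rw [← hg1, ← hg2, ← mul_nsmul, ← mul_nsmul, ← add_nsmul]
      congr 1
      ring
    have hL1g : ((2*(np+1)*(np+2)*(2*mp+3)*(2*mp+3)) + 1 : ℕ) • g
        = (11 + 18*np + 6*np^2 + 8*mp + 12*mp*np + 4*mp*np^2) • ((2*(np+1)*(np+2)*(2*mp+3)) • ι u + ((2*(np+1)*(np+2)*(2*mp+3))+1) • ι v) + ((2*(np+1)*(np+2)*(2*mp+3))+1) • ((2*(np+1)*(np+2)*(2*mp+3)) • ι p + ((2*(np+1)*(np+2)*(2*mp+3))+1) • ι q) := by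
      rw [← hg1, ← hg2, ← mul_nsmul, ← mul_nsmul, ← add_nsmul]
      congr 1
      ring
    refine ⟨(np+2) • ι ((2*np+3) • (u + v + p + q)) - g, ?_,
            g - (np+1) • ι ((2*np+3) • (u + v + p + q)), ?_, ?_⟩
    · refine ⟨(2*(np+1)*(np+2)*(2*mp+3)*(2*mp+3)), ⟨(72 + 144*np + 90*np^2 + 18*np^3 + 96*mp + 192*mp*np + 120*mp*np^2 + 24*mp*np^3 + 32*mp^2 + 64*mp^2*np + 40*mp^2*np^2 + 8*mp^2*np^3) • u + (60 + 126*np + 84*np^2 + 18*np^3 + 88*mp + 180*mp*np + 116*mp*np^2 + 24*mp*np^3 + 32*mp^2 + 64*mp^2*np + 40*mp^2*np^2 + 8*mp^2*np^3) • v + (72 + 144*np + 90*np^2 + 18*np^3 + 96*mp + 192*mp*np + 120*mp*np^2 + 24*mp*np^3 + 32*mp^2 + 64*mp^2*np + 40*mp^2*np^2 + 8*mp^2*np^3) • p + (60 + 126*np + 84*np^2 + 18*np^3 + 88*mp + 180*mp*np + 116*mp*np^2 + 24*mp*np^3 + 32*mp^2 + 64*mp^2*np + 40*mp^2*np^2 +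 8*mp^2*np^3) • q, ?_⟩,
              ⟨(90 + 169*np + 98*np^2 + 18*np^3 + 104*mp + 204*mp*np + 124*mp*np^2 + 24*mp*np^3 + 32*mp^2 + 64*mp^2*np + 40*mp^2*np^2 + 8*mp^2*np^3) • u + (79 + 151*np + 92*np^2 + 18*np^3 + 96*mp + 192*mp*np + 120*mp*np^2 + 24*mp*np^3 + 32*mp^2 + 64*mp^2*np + 40*mp^2*np^2 + 8*mp^2*np^3) • v + (66 + 133*np + 86*np^2 + 18*np^3 + 88*mp + 180*mp*np + 116*mp*np^2 + 24*mp*np^3 + 32*mp^2 + 64*mp^2*np + 40*mp^2*np^2 + 8*mp^2*np^3) • p + (53 + 115*np + 80*np^2 + 18*np^3 + 80*mp + 168*mp*np + 112*mp*np^2 + 24*mp*np^3 + 32*mp^2 + 64*mp^2*np + 40*mp^2*np^2 + 8*mp^2*np^3) • q, ?_⟩⟩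
      · rw [nsmul_sub, ← mul_nsmul, hLg]
        simp only [map_add, map_nsmul]
        match_scalars <;> push_cast <;> ring
      · rw [nsmul_sub, ← mul_nsmul, hL1g]
        simp only [map_add, map_nsmul]
        match_scalars <;> push_cast <;> ring
    · refine ⟨(2*(np+1)*(np+2)*(2*mp+3)*(2*mp+3)), ⟨(36 + 90*np + 72*np^2 + 18*np^3 + 48*mp + 120*mp*np + 96*mp*np^2 + 24*mp*np^3 + 16*mp^2 + 40*mp^2*np + 32*mp^2*np^2 + 8*mp^2*np^3) • u + (48 + 108*np + 78*np^2 + 18*np^3 + 56*mp + 132*mp*np + 100*mp*np^2 + 24*mp*np^3 + 16*mp^2 + 40*mp^2*np + 32*mp^2*np^2 + 8*mp^2*np^3) • v + (36 + 90*np + 72*np^2 + 18*np^3 + 48*mp + 120*mp*np + 96*mp*np^2 + 24*mp*np^3 + 16*mp^2 + 40*mp^2*np + 32*mp^2*np^2 + 8*mp^2*np^3) • p + (48 + 108*np + 78*np^2 + 18*np^3 + 56*mp + 132*mp*np + 100*mp*np^2 + 24*mp*np^3 + 16*mp^2 + 40*mp^2*np + 32*mp^2*np^2 + 8*mp^2*np^3)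 • q, ?_⟩,
              ⟨(21 + 67*np + 64*np^2 + 18*np^3 + 40*mp + 108*mp*np + 92*mp*np^2 + 24*mp*np^3 + 16*mp^2 + 40*mp^2*np + 32*mp^2*np^2 + 8*mp^2*np^3) • u + (32 + 85*np + 70*np^2 + 18*np^3 + 48*mp + 120*mp*np + 96*mp*np^2 + 24*mp*np^3 + 16*mp^2 + 40*mp^2*np + 32*mp^2*np^2 + 8*mp^2*np^3) • v + (45 + 103*np + 76*np^2 + 18*np^3 + 56*mp + 132*mp*np + 100*mp*np^2 + 24*mp*np^3 + 16*mp^2 + 40*mp^2*np + 32*mp^2*np^2 + 8*mp^2*np^3) • p + (58 + 121*np + 82*np^2 + 18*np^3 + 64*mp + 144*mp*np + 104*mp*np^2 + 24*mp*np^3 + 16*mp^2 + 40*mp^2*np + 32*mp^2*np^2 + 8*mp^2*np^3) • q, ?_⟩⟩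
      · rw [nsmul_sub, ← mul_nsmul, hLg]
        simp only [map_add, map_nsmul]
        match_scalars <;> push_cast <;> ring
      · rw [nsmul_sub, ← mul_nsmul, hL1g]
        simp only [map_add, map_nsmul]
        match_scalars <;> push_cast <;> ring
    · rw [nsmul_sub, nsmul_sub, ← mul_nsmul, ← mul_nsmul]
      match_scalars <;> push_cast <;> ring
end

section
/- Let M be an algebraically ordered commutative monoid. If M is weakly divisible then M is almost divisible: for every x ∈ M and n ∈ ℕ there exists z ∈ M with n·z ≤ x ≤ (n+1)·z. Conversely, if M is moreover cancellative and almost divisible, then M is weakly divisible. -/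
theorem stmt_14 {M : Type*} [AddCommMonoid M] [Preorder M]
    (horder : ∀ x y : M, x ≤ y ↔ ∃ z : M, x + z = y) :
    ((∀ (x : M) (n : ℕ), ∃ y z : M, x = n • y + (n + 1) • z) →
      ∀ (x : M) (n : ℕ), ∃ z : M, n • z ≤ x ∧ x ≤ (n + 1) • z) ∧
    ((∀ a b c : M, a + c = b + c → a = b) →
      (∀ (x : M) (n : ℕ), ∃ z : M, n • z ≤ x ∧ x ≤ (n + 1) • z) →
      ∀ (x : M) (n : ℕ), ∃ y z : M, x = n • y + (n + 1) • z) := by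
  constructor
  · intro h x n
    obtain ⟨y, z, hx⟩ := h x n
    refine ⟨y + z, (horder _ _).2 ⟨z, ?_⟩, (horder _ _).2 ⟨y, ?_⟩⟩
    · rw [hx, smul_add, succ_nsmul]; abel
    · rw [hx, smul_add, succ_nsmul, succ_nsmul]; abel
  · intro hc h x n
    obtain ⟨z, h1, h2⟩ := h x n
    obtain ⟨u, hu⟩ := (horder _ _).1 h1
    obtain ⟨v, hv⟩ := (horder _ _).1 h2
    have huv : u + v = z := by
      apply hc _ _ (n • z)
      rw [add_comm (u + v), ← add_assoc, hu, hv, succ_nsmul, add_comm]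
    refine ⟨v, u, ?_⟩
    calc x = n • z + u := hu.symm
      _ = n • (u + v) + u := by rw [huv]
      _ = n • v + (n + 1) • u := by rw [smul_add, succ_nsmul]; abel
end

section
/- Let M be a positively ordered semigroup that is a refinement semigroup, algebraically ordered, and cancellative. If x ≤_p y (there is n with n·x ≤ n·y and (n+1)·x ≤ (n+1)·y), then x ≤_d y: there exist decompositions x = x₁ + x₂ and y = y₁ + y₂ with x₁ ≤ y₁ and (k+1)·x₂ ≤ k·y₂ for some k ∈ ℕ. -/
theorem stmt_15 {M : Type*} [AddCommMonoid M] [PartialOrder M]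
    (hpos : ∀ x : M, 0 ≤ x)
    (horder : ∀ x y : M, x ≤ y ↔ ∃ z : M, x + z = y)
    (hcanc : ∀ a b c : M, a + c = b + c → a = b)
    (href : ∀ x₁ x₂ y₁ y₂ : M, x₁ + x₂ = y₁ + y₂ →
      ∃ z₁₁ z₁₂ z₂₁ z₂₂ : M, x₁ = z₁₁ + z₁₂ ∧ x₂ = z₂₁ + z₂₂ ∧
        y₁ = z₁₁ + z₂₁ ∧ y₂ = z₁₂ + z₂₂)
    (x y : M)
    (hp : ∃ n : ℕ, n • x ≤ n • y ∧ (n + 1) • x ≤ (n + 1) • y) :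
    ∃ x₁ x₂ y₁ y₂ : M, x = x₁ + x₂ ∧ y = y₁ + y₂ ∧ x₁ ≤ y₁ ∧
      ∃ k : ℕ, (k + 1) • x₂ ≤ k • y₂ := by
  obtain ⟨n, h1, h2⟩ := hp
  obtain ⟨c, hc⟩ := (horder _ _).mp h1
  obtain ⟨d, hd⟩ := (horder _ _).mp h2
  have hxd : x + d = y + c := by
    apply hcanc _ _ (n • x)
    have e1 : x + d + n • x = (n + 1) • x + d := by
      rw [succ_nsmul]; abel
    have e2 : y + c + n • x = y + n • y := by
      rw [← hc]; abel
    rw [e1, hd, e2, succ_nsmul]; abel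
  obtain ⟨z₁₁, z₁₂, z₂₁, z₂₂, hx, hdz, hy, hcz⟩ := href x d y c hxd
  refine ⟨z₁₁, z₁₂, z₁₁, z₂₁, hx, hy, le_refl _, n, ?_⟩
  rw [horder]
  refine ⟨z₂₂, ?_⟩
  apply hcanc _ _ (n • z₁₁)
  have e3 : (n + 1) • z₁₂ + z₂₂ + n • z₁₁ = n • x + c := by
    rw [hx, hcz, succ_nsmul, smul_add]; abel
  have e4 : n • z₂₁ + n • z₁₁ = n • y := by
    rw [hy, smul_add]; abel
  rw [e3, hc, ← e4]
end

section
/- Let M be a simple, algebraically ordered, cancellative commutative monoid. If x ≤_p y (some n with n·x ≤ n·y and (n+1)·x ≤ (n+1)·y), then x ≤_s y, i.e., either x ≤ y or (k+1)·x ≤ k·y for some k ∈ ℕ. -/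
theorem stmt_16 {M : Type*} [AddCommMonoid M] [PartialOrder M]
    (horder : ∀ x y : M, x ≤ y ↔ ∃ z : M, x + z = y)
    (hcanc : ∀ a b c : M, a + c = b + c → a = b)
    (hsimple : ∀ z x : M, z ≠ 0 → ∃ m : ℕ, x ≤ m • z)
    (x y : M)
    (hp : ∃ n : ℕ, n • x ≤ n • y ∧ (n + 1) • x ≤ (n + 1) • y) :
    x ≤ y ∨ ∃ k : ℕ, (k + 1) • x ≤ k • y := by
  obtain ⟨n, hn, hn1⟩ := hp
  obtain ⟨z, hz⟩ := (horder _ _).1 hn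
  by_cases hz0 : z = 0
  · left
    subst hz0
    rw [add_zero] at hz
    obtain ⟨w, hw⟩ := (horder _ _).1 hn1
    rw [succ_nsmul, succ_nsmul, ← hz] at hw
    have h2 : (x + w) + n • x = y + n • x := by
      rw [add_comm y (n • x), ← hw]; abel
    exact (horder _ _).2 ⟨w, hcanc _ _ _ h2⟩
  · right
    obtain ⟨m, hm⟩ := hsimple z x hz0
    obtain ⟨u, hu⟩ := (horder _ _).1 hm
    refine ⟨m * n, (horder _ _).2 ⟨u, ?_⟩⟩
    rw [succ_nsmul, add_assoc, hu, mul_smul, mul_smul, ← smul_add, hz]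
end

section
/- Let M be a positively ordered semigroup. If x ≤_d y (there exist x = x₁ + x₂, y = y₁ + y₂ with x₁ ≤ y₁ and either x₂ = y₂ = 0 or (k+1)·x₂ ≤ k·y₂ for some k), then x ≤_p y: there exists n with n·x ≤ n·y and (n+1)·x ≤ (n+1)·y. -/
theorem stmt_17 {M : Type*} [AddCommMonoid M] [PartialOrder M]
    [CovariantClass M M (· + ·) (· ≤ ·)]
    (hpos : ∀ x : M, 0 ≤ x)
    (x y : M)
    (hd : ∃ x₁ x₂ y₁ y₂ : M, x = x₁ + x₂ ∧ y = y₁ + y₂ ∧ x₁ ≤ y₁ ∧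
      ((x₂ = 0 ∧ y₂ = 0) ∨ ∃ k : ℕ, (k + 1) • x₂ ≤ k • y₂)) :
    ∃ n : ℕ, n • x ≤ n • y ∧ (n + 1) • x ≤ (n + 1) • y := by
  have hswap : CovariantClass M M (Function.swap (· + ·)) (· ≤ ·) :=
    ⟨fun a b c h => by simpa [Function.swap, add_comm] using add_le_add_left h a⟩
  obtain ⟨x₁, x₂, y₁, y₂, hx, hy, h1, h2⟩ := hd
  subst hx; subst hy
  rcases h2 with ⟨hx2, hy2⟩ | ⟨k, hk⟩
  · subst hx2; subst hy2
    exact ⟨0, by simp, by simpa using h1⟩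
  · refine ⟨k, ?_, ?_⟩
    · have h2 : k • x₂ ≤ k • y₂ := le_trans (by
        have := hpos x₂
        calc k • x₂ ≤ k • x₂ + x₂ := le_add_of_nonneg_right (hpos x₂)
          _ = (k + 1) • x₂ := by rw [add_smul, one_smul]) hk
      calc k • (x₁ + x₂) = k • x₁ + k • x₂ := smul_add k x₁ x₂
        _ ≤ k • y₁ + k • y₂ := add_le_add (nsmul_le_nsmul_right h1 k) h2
        _ = k • (y₁ + y₂) := (smul_add k y₁ y₂).symm
    · have h2 : (k + 1) • x₂ ≤ (k + 1) • y₂ := le_trans hk (by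
        calc k • y₂ ≤ k • y₂ + y₂ := le_add_of_nonneg_right (hpos y₂)
          _ = (k + 1) • y₂ := by rw [add_smul, one_smul])
      calc (k + 1) • (x₁ + x₂) = (k + 1) • x₁ + (k + 1) • x₂ := smul_add _ _ _
        _ ≤ (k + 1) • y₁ + (k + 1) • y₂ :=
            add_le_add (nsmul_le_nsmul_right h1 (k + 1)) h2
        _ = (k + 1) • (y₁ + y₂) := (smul_add _ _ _).symm
end

section
/- The positively ordered semigroup Z = ℕ ⊔ (0, ∞] (the Cuntz semigroup of the Jiang–Su algebra, with compact part ℕ and soft part (0,∞], where a soft element t is below a compact n iff t ≤ n as reals, and a compact n is below a soft t iff n < t or n = 0) is not preminimal: there exist x, y, v, w ∈ Z with x + v ≤ y + v and v ≤ w but x + w ≰ y + w. -/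
/-- The Cuntz semigroup of the Jiang–Su algebra: `Z = ℕ ⊔ (0,∞]`, with compact part `ℕ`
and soft part `(0,∞]` (strictly positive extended reals). -/
def JSCu : Type := ℕ ⊕ {t : ENNReal // 0 < t}

/-- Addition on `Z`: compact + compact is compact; any sum involving a soft element is soft,
computed by extended real addition. -/
noncomputable def JSCu.add : JSCu → JSCu → JSCu
  | Sum.inl m, Sum.inl n => Sum.inl (m + n)
  | Sum.inl m, Sum.inr t => Sum.inr ⟨(m : ENNReal) + t.1, lt_of_lt_of_le t.2 le_add_self⟩
  | Sum.inr t, Sum.inl m => Sum.inr ⟨t.1 + (m : ENNReal), lt_of_lt_of_le t.2 le_self_add⟩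
  | Sum.inr s, Sum.inr t => Sum.inr ⟨s.1 + t.1, lt_of_lt_of_le s.2 le_self_add⟩

/-- The order on `Z`: the usual order within each part; a soft `s` is below a compact `n`
iff `s ≤ n` as extended reals; a compact `n` is below a soft `t` iff `n < t` or `n = 0`. -/
def JSCu.le : JSCu → JSCu → Prop
  | Sum.inl m, Sum.inl n => m ≤ n
  | Sum.inl m, Sum.inr t => (m : ENNReal) < t.1 ∨ m = 0
  | Sum.inr s, Sum.inl n => s.1 ≤ (n : ENNReal)
  | Sum.inr s, Sum.inr t => s.1 ≤ t.1

/-- `Z = Cu(𝒵)` is not preminimal: there are `x, y, v, w` with `x + v ≤ y + v` and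
`v ≤ w`, but `x + w ≰ y + w`. -/
theorem stmt_19 :
    ∃ x y v w : JSCu, JSCu.le (JSCu.add x v) (JSCu.add y v) ∧ JSCu.le v w ∧
      ¬ JSCu.le (JSCu.add x w) (JSCu.add y w) := by
  refine ⟨Sum.inl 2, Sum.inr ⟨2, by norm_num⟩, Sum.inr ⟨1, by norm_num⟩, Sum.inl 1, ?_, ?_, ?_⟩
  · simp [JSCu.add, JSCu.le]
  · simp [JSCu.le]
  · simp [JSCu.add, JSCu.le]; norm_num
end
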